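/- Let C be a field of characteristic 0 containing a primitive m-th root of unity (m ≥ 2), let k = C(t) with the derivation δ = d/dt, let λ_1, …, λ_m ∈ C be nonzero and pairwise distinct, and let f = f₁/f₂ where f₁, f₂ ∈ C[t] are coprime polynomials and f₂ has an irreducible factor of multiplicity exactly 1. Let P ∈ M_m(k) be the matrix with diagonal entries λ_1, …, λ_m, entry f in position (1,m), and zeros elsewhere. Then a matrix X ∈ M_m(k) satisfies d_P(X) = 0 if and only if X = diag(μ_1, μ_2, …, μ_{m−1}, μ_1) for some μ_1, …, μ_{m−1} ∈ C, i.e. the constants of (M_m(k), d_P) are exactly the diagonal matrices with entries in C whose first and last diagonal entries coincide. -/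

import Mathlib

open Polynomial

namespace DPaux
variable {C : Type*} [Field C] [CharZero C]

theorem dzero (δ : RatFunc C → RatFunc C)
    (hδa : ∀ x y : RatFunc C, δ (x + y) = δ x + δ y) : δ 0 = 0 := by
  have h := hδa 0 0
  simp only [add_zero] at h
  linear_combination -h

theorem dpoly (δ : RatFunc C → RatFunc C)
    (hδa : ∀ x y : RatFunc C, δ (x + y) = δ x + δ y)
    (hδm : ∀ x y : RatFunc C, δ (x * y) = x * δ y + δ x * y)
    (hδC : ∀ c : C, δ (RatFunc.C c) = 0)
    (hδX : δ RatFunc.X = 1) (q : C[X]) :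
    δ (algebraMap C[X] (RatFunc C) q) = algebraMap C[X] (RatFunc C) (derivative q) := by
  induction q using Polynomial.induction_on with
  | C a => simpa [RatFunc.algebraMap_C] using hδC a
  | add p q hp hq => simp [map_add, hδa, hp, hq]
  | monomial n a ih =>
      have e : (Polynomial.C a * X ^ (n + 1) : C[X]) = (Polynomial.C a * X ^ n) * X := by ring
      rw [e, map_mul, hδm, ih, RatFunc.algebraMap_X, hδX,
        show derivative (Polynomial.C a * X ^ n * X)
            = derivative (Polynomial.C a * X ^ n) * X + Polynomial.C a * X ^ n by
          rw [derivative_mul, derivative_X]; ring,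
        map_add]
      simp only [map_mul, RatFunc.algebraMap_X]
      ring

theorem dkey (δ : RatFunc C → RatFunc C)
    (hδa : ∀ x y : RatFunc C, δ (x + y) = δ x + δ y)
    (hδm : ∀ x y : RatFunc C, δ (x * y) = x * δ y + δ x * y)
    (hδC : ∀ c : C, δ (RatFunc.C c) = 0)
    (hδX : δ RatFunc.X = 1) (y : RatFunc C) :
    δ y * algebraMap C[X] (RatFunc C) y.denom
      + y * algebraMap C[X] (RatFunc C) (derivative y.denom)
      = algebraMap C[X] (RatFunc C) (derivative y.num) := by
  have h2 : y * algebraMap C[X] (RatFunc C) y.denom = algebraMap C[X] (RatFunc C) y.num := by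
    nth_rewrite 1 [← RatFunc.num_div_denom y]
    exact div_mul_cancel₀ _ (RatFunc.algebraMap_ne_zero (RatFunc.denom_ne_zero y))
  have h3 := hδm y (algebraMap C[X] (RatFunc C) y.denom)
  rw [h2, dpoly δ hδa hδm hδC hδX, dpoly δ hδa hδm hδC hδX] at h3
  linear_combination -h3

end DPaux

namespace DPaux
variable {C : Type*} [Field C] [CharZero C]

theorem dnum (y : RatFunc C) :
    y * algebraMap C[X] (RatFunc C) y.denom = algebraMap C[X] (RatFunc C) y.num := by
  nth_rewrite 1 [← RatFunc.num_div_denom y]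
  exact div_mul_cancel₀ _ (RatFunc.algebraMap_ne_zero (RatFunc.denom_ne_zero y))

/-- If `h ∣ derivative h` then `derivative h = 0`. -/
theorem der_zero_of_dvd {h : C[X]} (hd : h ∣ derivative h) : derivative h = 0 := by
  by_contra hne
  have hdeg : h.natDegree ≠ 0 := by
    intro h0
    exact hne (derivative_of_natDegree_zero h0)
  have h1 := Polynomial.natDegree_le_of_dvd hd hne
  have h2 := Polynomial.natDegree_derivative_lt hdeg
  omega

theorem dconst (δ : RatFunc C → RatFunc C)
    (hδa : ∀ x y : RatFunc C, δ (x + y) = δ x + δ y)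
    (hδm : ∀ x y : RatFunc C, δ (x * y) = x * δ y + δ x * y)
    (hδC : ∀ c : C, δ (RatFunc.C c) = 0)
    (hδX : δ RatFunc.X = 1) (y : RatFunc C) (hy : δ y = 0) :
    ∃ c : C, y = RatFunc.C c := by
  have hk := dkey δ hδa hδm hδC hδX y
  rw [hy, zero_mul, zero_add] at hk
  have e : (y.num * derivative y.denom : C[X]) = derivative y.num * y.denom := by
    apply RatFunc.algebraMap_injective C
    rw [map_mul, map_mul]
    linear_combination (algebraMap C[X] (RatFunc C) y.denom) * hk
      - (algebraMap C[X] (RatFunc C) (derivative y.denom)) * dnum y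
  have hdvd : y.denom ∣ y.num * derivative y.denom := ⟨derivative y.num, by linear_combination e⟩
  have hd' : y.denom ∣ derivative y.denom :=
    (RatFunc.isCoprime_num_denom y).symm.dvd_of_dvd_mul_left hdvd
  have hh0 : derivative y.denom = 0 := der_zero_of_dvd hd'
  have hg0 : derivative y.num = 0 := by
    have h0 : derivative y.num * y.denom = 0 := by rw [← e, hh0, mul_zero]
    exact (mul_eq_zero.mp h0).resolve_right (RatFunc.denom_ne_zero y)
  have hyv : y = algebraMap C[X] (RatFunc C) (Polynomial.C (y.num.coeff 0))
      / algebraMap C[X] (RatFunc C) (Polynomial.C (y.denom.coeff 0)) := by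
    conv_lhs => rw [← RatFunc.num_div_denom y]
    rw [← Polynomial.eq_C_of_derivative_eq_zero hg0, ← Polynomial.eq_C_of_derivative_eq_zero hh0]
  refine ⟨y.num.coeff 0 / y.denom.coeff 0, ?_⟩
  rw [map_div₀, ← RatFunc.algebraMap_C (y.num.coeff 0), ← RatFunc.algebraMap_C (y.denom.coeff 0)]
  exact hyv

theorem dhomog (δ : RatFunc C → RatFunc C)
    (hδa : ∀ x y : RatFunc C, δ (x + y) = δ x + δ y)
    (hδm : ∀ x y : RatFunc C, δ (x * y) = x * δ y + δ x * y)
    (hδC : ∀ c : C, δ (RatFunc.C c) = 0)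
    (hδX : δ RatFunc.X = 1) (c : C) (hc : c ≠ 0) (y : RatFunc C)
    (hy : δ y = RatFunc.C c * y) : y = 0 := by
  have hk := dkey δ hδa hδm hδC hδX y
  rw [hy] at hk
  have hCc : (RatFunc.C c : RatFunc C) = algebraMap C[X] (RatFunc C) (Polynomial.C c) :=
    (RatFunc.algebraMap_C c).symm
  have e : (Polynomial.C c * y.num * y.denom + y.num * derivative y.denom : C[X])
      = derivative y.num * y.denom := by
    apply RatFunc.algebraMap_injective C
    simp only [map_mul, map_add]
    rw [← hCc]
    linear_combination (algebraMap C[X] (RatFunc C) y.denom) * hk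
      - (RatFunc.C c * algebraMap C[X] (RatFunc C) y.denom
          + algebraMap C[X] (RatFunc C) (derivative y.denom)) * dnum y
  have hdvd : y.denom ∣ y.num * derivative y.denom :=
    ⟨derivative y.num - Polynomial.C c * y.num, by linear_combination e⟩
  have hd' : y.denom ∣ derivative y.denom :=
    (RatFunc.isCoprime_num_denom y).symm.dvd_of_dvd_mul_left hdvd
  have hh0 : derivative y.denom = 0 := der_zero_of_dvd hd'
  rw [hh0, mul_zero, add_zero] at e
  have e2 : Polynomial.C c * y.num = derivative y.num :=
    mul_right_cancel₀ (RatFunc.denom_ne_zero y) e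
  by_contra hy0
  have hg : y.num ≠ 0 := RatFunc.num_ne_zero hy0
  rcases Nat.eq_zero_or_pos y.num.natDegree with h0 | hpos
  · have hgC := Polynomial.eq_C_of_natDegree_eq_zero h0
    rw [hgC, Polynomial.derivative_C, ← Polynomial.C_mul, Polynomial.C_eq_zero] at e2
    exact hg (by rw [hgC, mul_eq_zero.mp e2 |>.resolve_left hc, Polynomial.C_0])
  · have hlt := Polynomial.natDegree_derivative_lt hpos.ne'
    rw [← e2, Polynomial.natDegree_C_mul_eq_of_mul_eq_one (inv_mul_cancel₀ hc)] at hlt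
    omega

end DPaux

namespace DPaux
variable {C : Type*} [Field C] [CharZero C]

theorem dinhomog (δ : RatFunc C → RatFunc C)
    (hδa : ∀ x y : RatFunc C, δ (x + y) = δ x + δ y)
    (hδm : ∀ x y : RatFunc C, δ (x * y) = x * δ y + δ x * y)
    (hδC : ∀ c : C, δ (RatFunc.C c) = 0)
    (hδX : δ RatFunc.X = 1) (c a : C) (f₁ f₂ : C[X]) (hcop : IsCoprime f₁ f₂)
    (p : C[X]) (hp : Irreducible p) (hpd : p ∣ f₂) (hp2 : ¬ (p ^ 2 ∣ f₂))
    (y : RatFunc C)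
    (hy : δ y + RatFunc.C c * y + RatFunc.C a *
      (algebraMap C[X] (RatFunc C) f₁ / algebraMap C[X] (RatFunc C) f₂) = 0) :
    a = 0 := by
  by_contra ha
  have hp' : Prime p := hp.prime
  have hf₂0 : f₂ ≠ 0 := fun h0 => hp2 (h0 ▸ dvd_zero _)
  have hF2 : algebraMap C[X] (RatFunc C) f₂ ≠ 0 := RatFunc.algebraMap_ne_zero hf₂0
  have hdiv : algebraMap C[X] (RatFunc C) f₁ / algebraMap C[X] (RatFunc C) f₂
      * algebraMap C[X] (RatFunc C) f₂ = algebraMap C[X] (RatFunc C) f₁ :=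
    div_mul_cancel₀ _ hF2
  have hk := dkey δ hδa hδm hδC hδX y
  have dn := dnum y
  -- the cleared-denominator polynomial identity
  have E : f₂ * (derivative y.num * y.denom - y.num * derivative y.denom)
      + Polynomial.C c * f₂ * (y.num * y.denom) + Polynomial.C a * f₁ * y.denom ^ 2 = 0 := by
    apply RatFunc.algebraMap_injective C
    simp only [map_add, map_mul, map_sub, map_pow, map_zero, RatFunc.algebraMap_C]
    linear_combination (-(algebraMap C[X] (RatFunc C) f₂ * algebraMap C[X] (RatFunc C) y.denom)) * hk
      + (algebraMap C[X] (RatFunc C) f₂ * algebraMap C[X] (RatFunc C) (derivative y.denom)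
          - RatFunc.C c * algebraMap C[X] (RatFunc C) f₂ * algebraMap C[X] (RatFunc C) y.denom) * dn
      + (algebraMap C[X] (RatFunc C) f₂ * algebraMap C[X] (RatFunc C) y.denom ^ 2) * hy
      - (RatFunc.C a * algebraMap C[X] (RatFunc C) y.denom ^ 2) * hdiv
  obtain ⟨n, h₀, hnd, hfact⟩ := WfDvdMonoid.max_power_factor (RatFunc.denom_ne_zero y) hp
  obtain ⟨f₃, hf₃⟩ := id hpd
  rcases Nat.eq_zero_or_pos n with rfl | hn
  · -- p does not divide the denominator: contradiction comparing valuations 0 vs ≥ 1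
    rw [pow_zero, one_mul] at hfact
    have hd : p ∣ Polynomial.C a * f₁ * y.denom ^ 2 := by
      have e : Polynomial.C a * f₁ * y.denom ^ 2
          = f₂ * (-(derivative y.num * y.denom - y.num * derivative y.denom)
              - Polynomial.C c * (y.num * y.denom)) := by linear_combination E
      rw [e]
      exact hpd.mul_right _
    rcases hp'.dvd_mul.mp hd with hd1 | hd2
    · rcases hp'.dvd_mul.mp hd1 with hd3 | hd4
      · exact hp.not_isUnit (isUnit_of_dvd_unit hd3 (Polynomial.isUnit_C.mpr
          (isUnit_iff_ne_zero.mpr ha)))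
      · exact hp.not_isUnit (hcop.isUnit_of_dvd' hd4 hpd)
    · exact hnd (hfact ▸ hp'.dvd_of_dvd_pow hd2)
  · -- p divides the denominator to exact order n ≥ 1
    obtain ⟨k, rfl⟩ : ∃ k, n = k + 1 := ⟨n - 1, (Nat.succ_pred_eq_of_pos hn).symm⟩
    have hpg : ¬ p ∣ y.num := fun hdg => hp.not_isUnit
      ((RatFunc.isCoprime_num_denom y).isUnit_of_dvd' hdg
        (hfact ▸ ⟨p ^ k * h₀, by ring⟩))
    have hder : derivative y.denom
        = Polynomial.C ((k + 1 : ℕ) : C) * p ^ k * derivative p * h₀ + p ^ (k + 1) * derivative h₀ := by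
      rw [hfact, derivative_mul, derivative_pow]
      simp only [Nat.add_sub_cancel]
      try ring
    -- the exact-order term is divisible by p^(k+2)
    have hD : p ^ (k + 2) ∣ f₂ * (y.num * (Polynomial.C ((k + 1 : ℕ) : C) * derivative p * h₀)) * p ^ k := by
      refine ⟨f₃ * derivative y.num * h₀ + Polynomial.C c * f₃ * y.num * h₀
        + Polynomial.C a * f₁ * p ^ k * h₀ ^ 2 - f₃ * y.num * derivative h₀, ?_⟩
      have e2 : f₂ * (y.num * (Polynomial.C ((k + 1 : ℕ) : C) * derivative p * h₀)) * p ^ k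
          = f₂ * y.num * derivative y.denom - f₂ * y.num * (p ^ (k + 1) * derivative h₀) := by
        rw [hder]; ring
      rw [e2]
      have e3 : f₂ * y.num * derivative y.denom
          = f₂ * derivative y.num * y.denom + Polynomial.C c * f₂ * (y.num * y.denom)
            + Polynomial.C a * f₁ * y.denom ^ 2 := by linear_combination -E
      rw [e3, hfact, hf₃]
      ring
    -- cancel p^k
    have hpne : (p : C[X]) ≠ 0 := hp'.ne_zero
    obtain ⟨w, hw⟩ := hD
    have hcancel : f₂ * (y.num * (Polynomial.C ((k + 1 : ℕ) : C) * derivative p * h₀)) = p ^ 2 * w := by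
      have := hw
      have hpk : (p ^ k : C[X]) ≠ 0 := pow_ne_zero _ hpne
      apply mul_right_cancel₀ hpk
      rw [this]; ring
    -- p does not divide the cofactor
    have hpv : ¬ p ∣ y.num * (Polynomial.C ((k + 1 : ℕ) : C) * derivative p * h₀) := by
      intro hdv
      rcases hp'.dvd_mul.mp hdv with h1 | h2
      · exact hpg h1
      · rcases hp'.dvd_mul.mp h2 with h3 | h4
        · rcases hp'.dvd_mul.mp h3 with h5 | h6
          · refine hp.not_isUnit (isUnit_of_dvd_unit h5 (Polynomial.isUnit_C.mpr
              (isUnit_iff_ne_zero.mpr ?_)))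
            exact Nat.cast_ne_zero.mpr (Nat.succ_ne_zero k)
          · -- p ∣ derivative p
            have hdp0 : derivative p ≠ 0 := by
              intro h0
              have := Polynomial.natDegree_eq_zero_of_derivative_eq_zero h0
              have := hp.natDegree_pos
              omega
            have h1 := Polynomial.natDegree_le_of_dvd h6 hdp0
            have h2 := Polynomial.natDegree_derivative_lt hp.natDegree_pos.ne'
            omega
        · exact hnd h4
    -- conclude p^2 ∣ f₂
    apply hp2
    obtain ⟨f₄, hf₄⟩ : p ∣ f₃ := by
      have hfv : f₃ * (y.num * (Polynomial.C ((k + 1 : ℕ) : C) * derivative p * h₀)) = p * w := by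
        apply mul_left_cancel₀ hpne
        rw [show p * (f₃ * (y.num * (Polynomial.C ((k + 1 : ℕ) : C) * derivative p * h₀)))
            = f₂ * (y.num * (Polynomial.C ((k + 1 : ℕ) : C) * derivative p * h₀)) from by
          rw [hf₃]; ring, hcancel]
        ring
      exact (hp'.dvd_mul.mp ⟨w, hfv⟩).resolve_right hpv
    exact ⟨f₄, by rw [hf₃, hf₄]; ring⟩

end DPaux
/-- Over `k = C(t)` with `d/dt`, if `f = f₁/f₂` with `f₁, f₂` coprime
polynomials and `f₂` having an irreducible factor of multiplicity exactly `1`, then the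
constants of `(M_m(k), d_P)` are exactly the diagonal matrices `diag(μ₁,…,μ_{m−1},μ₁)` with
entries in `C` whose first and last diagonal entries coincide. -/
theorem matrix_dP_constants_of_simple_pole
    {C : Type*} [Field C] [CharZero C] {m : ℕ} (hm : 2 ≤ m)
    {ω : C} (hω : IsPrimitiveRoot ω m)
    (δ : RatFunc C → RatFunc C)
    (hδa : ∀ x y : RatFunc C, δ (x + y) = δ x + δ y)
    (hδm : ∀ x y : RatFunc C, δ (x * y) = x * δ y + δ x * y)
    (hδC : ∀ c : C, δ (RatFunc.C c) = 0)
    (hδX : δ RatFunc.X = 1)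
    (lam : Fin m → C) (hlam : ∀ i, lam i ≠ 0) (hinj : Function.Injective lam)
    (f₁ f₂ : Polynomial C) (hcop : IsCoprime f₁ f₂)
    (hfac : ∃ p : Polynomial C, Irreducible p ∧ p ∣ f₂ ∧ ¬ (p ^ 2 ∣ f₂))
    (f : RatFunc C)
    (hf : f = algebraMap (Polynomial C) (RatFunc C) f₁
            / algebraMap (Polynomial C) (RatFunc C) f₂)
    (P : Matrix (Fin m) (Fin m) (RatFunc C))
    (hP : ∀ i j : Fin m, P i j =
      (if i = j then RatFunc.C (lam i) else 0) +
      (if i = (⟨0, by omega⟩ : Fin m) ∧ j = (⟨m - 1, by omega⟩ : Fin m) then f else 0)) :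
    ∀ X : Matrix (Fin m) (Fin m) (RatFunc C),
      X.map δ + X * P - P * X = 0 ↔
      ∃ μ : Fin m → C,
        μ ⟨m - 1, by omega⟩ = μ ⟨0, by omega⟩ ∧
        ∀ i j : Fin m, X i j = if i = j then RatFunc.C (μ i) else 0 := by
  obtain ⟨p, hp, hpd, hp2⟩ := hfac
  intro X
  set z : Fin m := ⟨0, by omega⟩ with hzdef
  set l : Fin m := ⟨m - 1, by omega⟩ with hldef
  have hzl : z ≠ l := by
    simp only [hzdef, hldef, ne_eq, Fin.mk.injEq]
    omega
  -- entrywise formulas for the products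
  have hXP : ∀ i j, (X * P) i j = X i j * RatFunc.C (lam j) +
      (if j = l then X i z * f else 0) := by
    intro i j
    rw [Matrix.mul_apply]
    have e : ∀ x : Fin m, X i x * P x j =
        (if x = j then X i x * RatFunc.C (lam x) else 0)
        + (if x = z ∧ j = l then X i x * f else 0) := by
      intro x
      rw [hP]
      split_ifs <;> ring
    rw [Finset.sum_congr rfl (fun x _ => e x), Finset.sum_add_distrib]
    congr 1
    · rw [Finset.sum_ite_eq' Finset.univ j (fun x => X i x * RatFunc.C (lam x))]
      simp
    · by_cases hj : j = l
      · simp [hj]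
      · simp [hj]
  have hPX : ∀ i j, (P * X) i j = RatFunc.C (lam i) * X i j +
      (if i = z then f * X l j else 0) := by
    intro i j
    rw [Matrix.mul_apply]
    have e : ∀ x : Fin m, P i x * X x j =
        (if i = x then RatFunc.C (lam i) * X x j else 0)
        + (if i = z ∧ x = l then f * X x j else 0) := by
      intro x
      rw [hP]
      split_ifs <;> ring
    rw [Finset.sum_congr rfl (fun x _ => e x), Finset.sum_add_distrib]
    congr 1
    · rw [Finset.sum_ite_eq Finset.univ i (fun x => RatFunc.C (lam i) * X x j)]
      simp
    · by_cases hi : i = z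
      · simp [hi]
      · simp [hi]
  constructor
  · -- forward direction
    intro hX
    have key : ∀ i j, δ (X i j) + (X i j * RatFunc.C (lam j) +
        (if j = l then X i z * f else 0)) - (RatFunc.C (lam i) * X i j +
        (if i = z then f * X l j else 0)) = 0 := by
      intro i j
      have h0 : (X.map δ + X * P - P * X) i j = (0 : Matrix (Fin m) (Fin m) (RatFunc C)) i j := by
        rw [hX]
      rwa [Matrix.sub_apply, Matrix.add_apply, Matrix.map_apply, hXP, hPX,
        Matrix.zero_apply] at h0
    -- entries away from column l and row z
    have step1 : ∀ i j, i ≠ z → j ≠ l → i ≠ j → X i j = 0 := by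
      intro i j hiz hjl hij
      have h := key i j
      rw [if_neg hjl, if_neg hiz] at h
      refine DPaux.dhomog δ hδa hδm hδC hδX (lam i - lam j)
        (sub_ne_zero.mpr (fun hc => hij (hinj hc))) (X i j) ?_
      rw [map_sub]
      linear_combination h
    have hXz0 : ∀ i, i ≠ z → X i z = 0 := fun i hi =>
      step1 i z hi (fun hc => hzl hc) hi
    have hXlj : ∀ j, j ≠ l → X l j = 0 := fun j hj =>
      step1 l j (fun hc => hzl hc.symm) hj (fun hc => hj hc.symm)
    -- diagonal entries are constants
    have hdiag : ∀ i, ∃ μ : C, X i i = RatFunc.C μ := by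
      intro i
      apply DPaux.dconst δ hδa hδm hδC hδX
      have h := key i i
      by_cases hiz : i = z
      · rw [if_neg (fun hc : i = l => hzl (hiz.symm.trans hc)), if_pos hiz,
          hXlj i (fun hc : i = l => hzl (hiz.symm.trans hc)), mul_zero] at h
        linear_combination h
      · by_cases hil : i = l
        · rw [if_pos hil, if_neg hiz, hXz0 i hiz, zero_mul] at h
          linear_combination h
        · rw [if_neg hil, if_neg hiz] at h
          linear_combination h
    choose μ hμspec using hdiag
    -- the corner entry forces μ z = μ l and vanishes
    have hcorner := key z l
    rw [if_pos rfl, if_pos rfl, hμspec z, hμspec l] at hcorner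
    have ha0 : μ z - μ l = 0 := by
      refine DPaux.dinhomog δ hδa hδm hδC hδX (lam l - lam z) (μ z - μ l) f₁ f₂ hcop
        p hp hpd hp2 (X z l) ?_
      rw [map_sub, map_sub, ← hf]
      linear_combination hcorner
    have hμeq : μ z = μ l := sub_eq_zero.mp ha0
    have hXzl : X z l = 0 := by
      refine DPaux.dhomog δ hδa hδm hδC hδX (lam z - lam l)
        (sub_ne_zero.mpr (fun hc => hzl (hinj hc))) (X z l) ?_
      rw [map_sub]
      rw [hμeq] at hcorner
      linear_combination hcorner
    refine ⟨μ, hμeq.symm, ?_⟩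
    intro i j
    by_cases hij : i = j
    · subst hij
      rw [if_pos rfl]
      exact hμspec i
    · rw [if_neg hij]
      by_cases hiz : i = z
      · by_cases hjl : j = l
        · rw [hiz, hjl]
          exact hXzl
        · have h := key i j
          rw [if_neg hjl, if_pos hiz, hXlj j hjl, mul_zero] at h
          refine DPaux.dhomog δ hδa hδm hδC hδX (lam i - lam j)
            (sub_ne_zero.mpr (fun hc => hij (hinj hc))) (X i j) ?_
          rw [map_sub]
          linear_combination h
      · by_cases hjl : j = l
        · have h := key i j
          rw [if_pos hjl, if_neg hiz, hXz0 i hiz, zero_mul] at h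
          refine DPaux.dhomog δ hδa hδm hδC hδX (lam i - lam j)
            (sub_ne_zero.mpr (fun hc => hij (hinj hc))) (X i j) ?_
          rw [map_sub]
          linear_combination h
        · exact step1 i j hiz hjl hij
  · -- reverse direction
    rintro ⟨μ, hμc, hXd⟩
    ext i j
    rw [Matrix.sub_apply, Matrix.add_apply, Matrix.map_apply, hXP, hPX, Matrix.zero_apply,
      hXd i j, hXd i z, hXd l j]
    by_cases hij : i = j <;> by_cases hiz : i = z <;> by_cases hjl : j = l <;>
      first
        | exact absurd ((hiz.symm.trans hij).trans hjl) hzl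
        | (simp [hij, hiz, hjl, hδC, DPaux.dzero δ hδa, hzl, Ne.symm hzl, hμc]; done)
        | (simp [hij, hiz, hjl, hδC, DPaux.dzero δ hδa, hzl, Ne.symm hzl, hμc]; ring1)
        | (simp [hij, hiz, hjl, Ne.symm hjl, hδC, DPaux.dzero δ hδa, hzl, Ne.symm hzl, hμc]; done)
        | (simp [hij, hiz, hjl, Ne.symm hjl, hδC, DPaux.dzero δ hδa, hzl, Ne.symm hzl, hμc]; ring1)
        | (simp [hij, hiz, hjl, hij.symm.trans hiz, hδC, DPaux.dzero δ hδa, hzl, Ne.symm hzl,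
            hμc]; done)
        | (simp [hij, hiz, hjl, hij.symm.trans hiz, hδC, DPaux.dzero δ hδa, hzl, Ne.symm hzl,
            hμc]; ring1)
        | (simp [hij, hiz, hjl, hij.trans hjl, hδC, DPaux.dzero δ hδa, hzl, Ne.symm hzl,
            hμc]; done)
        | (simp [hij, hiz, hjl, hij.trans hjl, hδC, DPaux.dzero δ hδa, hzl, Ne.symm hzl,
            hμc]; ring1)
        | (simp [show j = z from hij.symm.trans hiz, hij, Ne.symm hjl, hδC,
            DPaux.dzero δ hδa, hzl, Ne.symm hzl, hμc]; done)
        | (simp [show j = z from hij.symm.trans hiz, hij, Ne.symm hjl, hδC,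
            DPaux.dzero δ hδa, hzl, Ne.symm hzl, hμc]; ring1)
        | (simp [show ¬j = z from fun hc => hiz (hij.trans hc), hij, hjl, Ne.symm hjl, hδC,
            DPaux.dzero δ hδa, hzl, Ne.symm hzl, hμc]; done)
        | (simp [show ¬j = z from fun hc => hiz (hij.trans hc), hij, hjl, Ne.symm hjl, hδC,
            DPaux.dzero δ hδa, hzl, Ne.symm hzl, hμc]; ring1)
        | (simp [show ¬z = j from fun hc => hij (hiz.trans hc), hiz, hjl, Ne.symm hjl, hδC,
            DPaux.dzero δ hδa, hzl, Ne.symm hzl, hμc]; done)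
        | (simp [show ¬z = j from fun hc => hij (hiz.trans hc), hiz, hjl, Ne.symm hjl, hδC,
            DPaux.dzero δ hδa, hzl, Ne.symm hzl, hμc]; ring1)
        | (simp [show ¬i = l from fun hc => hij (hc.trans hjl.symm), hiz, hjl, hδC,
            DPaux.dzero δ hδa, hzl, Ne.symm hzl, hμc]; done)
        | (simp [show ¬i = l from fun hc => hij (hc.trans hjl.symm), hiz, hjl, hδC,
            DPaux.dzero δ hδa, hzl, Ne.symm hzl, hμc]; ring1)
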